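/- Let n, M, i be integers with n ≥ 2, M ≥ n, and M+n ≤ i ≤ M+2n−1. Let u₀, …, uₙ be the standard basis of ℝ^{n+1}. For n ≤ s ≤ 2n−1 let D_s = cone{u_{j+1} + u_j : s−n ≤ j ≤ n−1}, and let T_s : ℝ^{n+1} → ℝ^{n+1} be the diagonal linear map multiplying the j-th coordinate by the binomial coefficient C(i−j, i−s). Then the convex cone generated by the union of the sets T_s(D_s) over all integers s with i−M ≤ s ≤ 2n−1 equals the sum, over integers j with i−M−n+1 ≤ j ≤ n, of the cones cone{(i−j−M+1)·u_j + (i−j+1)·u_{j−1}, n·u_j + (i−j+1)·u_{j−1}}. -/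

import Mathlib

/-!
By `(i - j) * C(i-j-1, i-s) = (s - j) * C(i-j, i-s)`, the image `T_s (u_{j+1} + u_j)` is a
positive multiple of `(s - j) • u_{j+1} + (i - j) • u_j`.  For fixed `j` this vector is affine
in `s`, and `s` ranges over the interval `[i - M, j + n]`, whose endpoints give exactly the two
generators of the `(j+1)`-st summand.  So both sides are the cone generated by all these pairs,
and the cone generated by a finite union is the sum of the cones generated by its pieces.
-/

open Finset

/-- `nonnegSpan S` is the set of (finite) nonnegative real linear combinations of
elements of `S`, i.e. the convex cone generated by `S` (together with `0`). -/
def nonnegSpan {V : Type*} [AddCommMonoid V] [Module ℝ V] (S : Set V) : Set V :=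
  { x | ∃ (k : ℕ) (c : Fin k → ℝ) (v : Fin k → V),
      (∀ t, 0 ≤ c t) ∧ (∀ t, v t ∈ S) ∧ x = ∑ t, c t • v t }

/-- The standard basis vector `u_j` of `ℝ^{n+1}`. -/
def stdb (n : ℕ) (j : Fin (n + 1)) : Fin (n + 1) → ℝ := Pi.single j 1

theorem nonnegSpan_eq_hull {V : Type*} [AddCommMonoid V] [Module ℝ V] (S : Set V) :
    nonnegSpan S = PointedCone.hull ℝ S := by
  ext x
  rw [SetLike.mem_coe, Submodule.mem_span_set']
  constructor
  · rintro ⟨k, c, v, hc, hv, rfl⟩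
    exact ⟨k, fun t => ⟨c t, hc t⟩, fun t => ⟨v t, hv t⟩, rfl⟩
  · rintro ⟨k, c, v, rfl⟩
    exact ⟨k, fun t => c t, fun t => v t, fun t => (c t).2, fun t => (v t).2, rfl⟩

section Cone

variable {𝕜 V : Type*}

theorem mem_hull_biUnion_iff_exists_sum [Semiring 𝕜] [PartialOrder 𝕜] [IsOrderedRing 𝕜]
    [AddCommMonoid V] [Module 𝕜 V] {ι : Type*}
    (F : Finset ι) (S : ι → Set V) (x : V) :
    x ∈ PointedCone.hull 𝕜 (⋃ j ∈ F, S j) ↔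
      ∃ f : ι → V,
        (∀ j ∈ F, f j ∈ PointedCone.hull 𝕜 (S j)) ∧ x = ∑ j ∈ F, f j := by
  classical
  unfold PointedCone.hull
  rw [Submodule.span_iUnion₂, Submodule.mem_iSup_finset_iff_exists_sum]
  constructor
  · rintro ⟨μ, rfl⟩
    exact ⟨fun j => μ j, fun j _ => (μ j).2, rfl⟩
  · rintro ⟨f, hf, rfl⟩
    refine ⟨fun j => if h : j ∈ F then ⟨f j, hf j h⟩ else 0,
      Finset.sum_congr rfl fun j hj => ?_⟩
    simp [hj]

theorem image_hull_subset_hull {W : Type*} [Semiring 𝕜] [PartialOrder 𝕜] [IsOrderedRing 𝕜]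
    [AddCommMonoid V] [Module 𝕜 V] [AddCommMonoid W] [Module 𝕜 W] (f : V →ₗ[𝕜] W)
    {S : Set V} {T : Set W}
    (h : ∀ x ∈ S, f x ∈ PointedCone.hull 𝕜 T) :
    f '' PointedCone.hull 𝕜 S ⊆ PointedCone.hull 𝕜 T :=
  (Submodule.map_span_le (f : V →ₗ[{c : 𝕜 // 0 ≤ c}] W) S _).2 h

theorem smul_add_mem_hull_pair [Field 𝕜] [LinearOrder 𝕜] [IsStrictOrderedRing 𝕜]
    [AddCommGroup V] [Module 𝕜 V] {a b t : 𝕜} (hat : a ≤ t) (htb : t ≤ b) (v w : V) :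
    t • v + w ∈ PointedCone.hull 𝕜 {a • v + w, b • v + w} := by
  rcases hat.eq_or_lt with rfl | hlt
  · exact PointedCone.subset_hull (Set.mem_insert _ _)
  have hab : 0 < b - a := by linarith
  have hcomb : t • v + w
      = ((b - t) / (b - a)) • (a • v + w) + ((t - a) / (b - a)) • (b • v + w) := by
    match_scalars <;> field_simp <;> ring
  rw [hcomb]
  refine add_mem (PointedCone.smul_mem _ ?_ (PointedCone.subset_hull (Set.mem_insert _ _)))
    (PointedCone.smul_mem _ ?_ (PointedCone.subset_hull (Set.mem_insert_of_mem _ rfl)))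
  · exact div_nonneg (by linarith) hab.le
  · exact div_nonneg (by linarith) hab.le

end Cone

/-- `u_j`, indexed by a natural number so that `u_{j+1}` and `u_{j-1}` need no bound proofs
(it is `0` for `j > n`). -/
def natBasis (n j : ℕ) : Fin (n + 1) → ℝ := fun r => if (r : ℕ) = j then 1 else 0

lemma stdb_eq_natBasis {n j : ℕ} (h : j < n + 1) : stdb n ⟨j, h⟩ = natBasis n j := by
  funext r
  simp [stdb, natBasis, Pi.single_apply, Fin.ext_iff]

/-- The diagonal of `T_s`. -/
def binomScale (n i s : ℕ) : Fin (n + 1) → ℝ :=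
  fun r => ((i - (r : ℕ)).choose (i - s) : ℝ)

lemma binomScale_mul_natBasis (n i s j : ℕ) :
    binomScale n i s * natBasis n j = ((i - j).choose (i - s) : ℝ) • natBasis n j := by
  funext r
  by_cases h : (r : ℕ) = j <;> simp [binomScale, natBasis, h]

def ray (n i j : ℕ) (s : ℝ) : Fin (n + 1) → ℝ :=
  (s - j + 1) • natBasis n j + ((i : ℝ) - j + 1) • natBasis n (j - 1)

lemma ray_mem_hull_pair (n i j : ℕ) {a b s : ℝ} (has : a ≤ s) (hsb : s ≤ b) :
    ray n i j s ∈ PointedCone.hull ℝ {ray n i j a, ray n i j b} := by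
  have hray : ∀ t, ray n i j t = t • natBasis n j
      + (((i : ℝ) - j + 1) • natBasis n (j - 1) + (1 - j : ℝ) • natBasis n j) :=
    fun t => by unfold ray; module
  simp only [hray]
  exact smul_add_mem_hull_pair has hsb _ _

lemma cast_choose_mul_sub {i j s : ℕ} (hji : j < i) (hjs : j ≤ s) (hsi : s ≤ i) :
    ((i - (j + 1)).choose (i - s) : ℝ) * ((i : ℝ) - j)
      = ((i - j).choose (i - s) : ℝ) * ((s : ℝ) - j) := by
  have h := Nat.choose_mul_succ_eq (i - (j + 1)) (i - s)
  rw [show i - (j + 1) + 1 = i - j by omega, show i - j - (i - s) = s - j by omega] at h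
  rw [← Nat.cast_sub hji.le, ← Nat.cast_sub hjs]
  exact_mod_cast h

lemma binomScale_mul_adjacent (n : ℕ) {i j s : ℕ} (hji : j < i) (hjs : j ≤ s)
    (hsi : s ≤ i) :
    binomScale n i s * (natBasis n (j + 1) + natBasis n j)
      = (((i - j).choose (i - s) : ℝ) / ((i : ℝ) - j)) • ray n i (j + 1) s := by
  have hij : (0 : ℝ) < (i : ℝ) - j := sub_pos.2 (by exact_mod_cast hji)
  have key := cast_choose_mul_sub hji hjs hsi
  rw [mul_add, binomScale_mul_natBasis, binomScale_mul_natBasis, ray, Nat.add_sub_cancel]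
  match_scalars
  · field_simp
    linear_combination key
  · field_simp
    ring

lemma binomScale_mul_adjacent_mem_iff (n : ℕ) {i j s : ℕ} (hji : j < i) (hjs : j ≤ s)
    (hsi : s ≤ i) (C : PointedCone ℝ (Fin (n + 1) → ℝ)) :
    binomScale n i s * (natBasis n (j + 1) + natBasis n j) ∈ C ↔ ray n i (j + 1) s ∈ C := by
  have hc : (0 : ℝ) < ((i - j).choose (i - s) : ℝ) / ((i : ℝ) - j) :=
    div_pos (Nat.cast_pos.2 (Nat.choose_pos (by omega))) (sub_pos.2 (by exact_mod_cast hji))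
  rw [binomScale_mul_adjacent n hji hjs hsi, PointedCone.smul_mem_iff C hc]

/-- The generators of `D_s`. -/
def adjacentSums (n s : ℕ) : Set (Fin (n + 1) → ℝ) :=
  {x | ∃ j, ∃ (_ : s - n ≤ j) (_ : j ≤ n - 1), x = natBasis n (j + 1) + natBasis n j}

def rayPair (n M i j : ℕ) : Set (Fin (n + 1) → ℝ) :=
  {((i : ℝ) - j - M + 1) • natBasis n j + ((i : ℝ) - j + 1) • natBasis n (j - 1),
    (n : ℝ) • natBasis n j + ((i : ℝ) - j + 1) • natBasis n (j - 1)}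

lemma rayPair_succ (n j : ℕ) {M i : ℕ} (hMi : M ≤ i) :
    rayPair n M i (j + 1) = {ray n i (j + 1) (i - M : ℕ), ray n i (j + 1) (j + n : ℕ)} := by
  rw [rayPair, ray, ray, Nat.cast_sub hMi]
  push_cast
  rw [show (i : ℝ) - M - (j + 1) + 1 = i - (j + 1) - M + 1 by ring,
    show (j : ℝ) + n - (j + 1) + 1 = n by ring]

theorem hull_biUnion_image_binomScale {n M i : ℕ} (hn : 0 < n) (hM : n ≤ M)
    (hi1 : M + n ≤ i) :
    PointedCone.hull ℝ (⋃ s ∈ Set.Icc (i - M) (2 * n - 1),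
        (binomScale n i s * ·) '' (PointedCone.hull ℝ (adjacentSums n s) : Set _))
      = PointedCone.hull ℝ (⋃ j ∈ Finset.Icc (i - M - n + 1) n, rayPair n M i j) := by
  apply le_antisymm
  · refine Submodule.span_le.2 fun x hx => ?_
    simp only [Set.mem_iUnion, Set.mem_Icc] at hx
    obtain ⟨s, ⟨hs1, hs2⟩, hx⟩ := hx
    refine image_hull_subset_hull (LinearMap.mulLeft ℝ (binomScale n i s)) (fun y hy => ?_) hx
    obtain ⟨j, hj1, hj2, rfl⟩ := hy
    rw [LinearMap.mulLeft_apply,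
      binomScale_mul_adjacent_mem_iff n (i := i) (j := j) (s := s)
        (by omega) (by omega) (by omega)]
    have hJ : j + 1 ∈ Finset.Icc (i - M - n + 1) n := Finset.mem_Icc.2 ⟨by omega, by omega⟩
    refine Submodule.span_mono ?_ (ray_mem_hull_pair n i (j + 1) (s := s)
      (a := (i - M : ℕ)) (b := (j + n : ℕ)) (Nat.cast_le.2 hs1) (Nat.cast_le.2 (by omega)))
    rw [← rayPair_succ n j (by omega)]
    exact Finset.subset_set_biUnion_of_mem hJ
  · refine Submodule.span_le.2 fun x hx => ?_
    simp only [Set.mem_iUnion, Finset.mem_Icc] at hx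
    obtain ⟨J, ⟨hJ1, hJ2⟩, hx⟩ := hx
    obtain ⟨j, rfl⟩ : ∃ j, J = j + 1 := ⟨J - 1, by omega⟩
    have hmem : ∀ s : ℕ, i - M ≤ s → s ≤ j + n → ray n i (j + 1) s ∈
        PointedCone.hull ℝ (⋃ s ∈ Set.Icc (i - M) (2 * n - 1),
          (binomScale n i s * ·) '' (PointedCone.hull ℝ (adjacentSums n s) : Set _)) := by
      intro s hs1 hs2
      rw [← binomScale_mul_adjacent_mem_iff n (i := i) (j := j) (s := s)
        (by omega) (by omega) (by omega)]
      refine PointedCone.subset_hull (Set.mem_biUnion (x := s) ⟨hs1, by omega⟩ ?_)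
      exact Set.mem_image_of_mem _ (PointedCone.subset_hull ⟨j, by omega, by omega, rfl⟩)
    rw [rayPair_succ n j (by omega)] at hx
    rcases hx with rfl | rfl
    · exact hmem _ le_rfl (by omega)
    · exact hmem _ (by omega) le_rfl

/-- Let `n, M, i` be integers with `n ≥ 2`, `M ≥ n` and `M+n ≤ i ≤ M+2n−1`.  With
`u₀, …, uₙ` the standard basis of `ℝ^{n+1}`, set
`D_s = cone{u_{j+1} + u_j : s−n ≤ j ≤ n−1}` for `n ≤ s ≤ 2n−1`, and let `T_s` be the
diagonal map multiplying the `j`-th coordinate by `C(i−j, i−s)`.  Then the convex cone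
generated by the union of the `T_s(D_s)` over `i−M ≤ s ≤ 2n−1` equals the sum, over
integers `j` with `i−M−n+1 ≤ j ≤ n`, of the cones
`cone{(i−j−M+1)·u_j + (i−j+1)·u_{j−1}, n·u_j + (i−j+1)·u_{j−1}}`. -/
theorem stmt_14 (n M i : ℕ) (hn : 2 ≤ n) (hM : n ≤ M)
    (hi1 : M + n ≤ i) :
    nonnegSpan (⋃ s ∈ Set.Icc (i - M) (2 * n - 1),
      (fun y : Fin (n + 1) → ℝ => fun j : Fin (n + 1) =>
          ((i - (j : ℕ)).choose (i - s) : ℝ) * y j) ''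
        nonnegSpan { x | ∃ j : ℕ, ∃ _ : s - n ≤ j, ∃ _ : j ≤ n - 1,
          x = stdb n ⟨j + 1, by omega⟩ + stdb n ⟨j, by omega⟩ })
      = { x : Fin (n + 1) → ℝ | ∃ f : ℕ → (Fin (n + 1) → ℝ),
          (∀ j, i - M - n + 1 ≤ j → ∀ hj : j ≤ n,
            f j ∈ nonnegSpan
              {((i : ℝ) - j - M + 1) • stdb n ⟨j, by omega⟩
                  + ((i : ℝ) - j + 1) • stdb n ⟨j - 1, by omega⟩,
                (n : ℝ) • stdb n ⟨j, by omega⟩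
                  + ((i : ℝ) - j + 1) • stdb n ⟨j - 1, by omega⟩}) ∧
          x = ∑ j ∈ Finset.Icc (i - M - n + 1) n, f j } := by
  simp only [nonnegSpan_eq_hull, stdb_eq_natBasis]
  -- the image map of the statement is `binomScale n i s * ·` up to unfolding
  erw [hull_biUnion_image_binomScale (by omega) hM hi1]
  ext x
  rw [SetLike.mem_coe, mem_hull_biUnion_iff_exists_sum]
  simp only [Finset.mem_Icc, and_imp, rayPair, Set.mem_ofPred_eq, SetLike.mem_coe]
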